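/- arXiv:2007.10976 — 2 statements merged into one kernel-verified Lean document; each statement's English description precedes it below -/
import Mathlib

section
/- Let ε ∈ (0,1/2], k ≥ 1, let 𝒲 be a family of channels from [2k] to finite alphabets, and consider a deterministic sequentially interactive protocol over n users using 𝒲. Let Z be uniform on {−1,+1}^k and, conditionally on Z, let the inputs be i.i.d. with law p_Z; let q denote the resulting (mixture) distribution of the transcript Y^n. For a prefix y^t, let u(·|y^t) denote the distribution y ↦ (1/(2k)) Σ_{x∈[2k]} W^{y^t}(y|x) of the next message when the (t+1)-st input is uniform on [2k]. Then for every 0 ≤ t ≤ n−1: E_{Y^t ∼ q}[ KL( q(Y_{t+1} ∈ · | Y^t) ‖ u(· | Y^t) ) ] ≤ (4 ln 2) · (ε²/k) · ‖𝒲‖_op · Σ_{i=1}^k I(Z_i; Y^t), where the KL divergence is measured in nats and the mutual information in bits. -/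
open Finset

namespace Paper

/-- A probability distribution on a finite type, given by its mass function. -/
def IsDist {α : Type*} [Fintype α] (p : α → ℝ) : Prop :=
  (∀ a, 0 ≤ p a) ∧ ∑ a, p a = 1

/-- A channel (row-stochastic kernel) from `α` to the finite alphabet `𝒴`. -/
def IsChannel {α 𝒴 : Type*} [Fintype α] [Fintype 𝒴] (W : α → 𝒴 → ℝ) : Prop :=
  ∀ x, IsDist (W x)

/-- Total variation distance between mass functions on a finite type. -/
noncomputable def tvDist {α : Type*} [Fintype α] (p q : α → ℝ) : ℝ :=
  (∑ a, |p a - q a|) / 2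

/-- The element `2i-1` (1-indexed) of `[2k]`, i.e. index `2i` in 0-indexed terms. -/
def lo {k : ℕ} (i : Fin k) : Fin (2 * k) := ⟨2 * i.val, by have := i.isLt; omega⟩

/-- The element `2i` (1-indexed) of `[2k]`, i.e. index `2i+1` in 0-indexed terms. -/
def hi {k : ℕ} (i : Fin k) : Fin (2 * k) := ⟨2 * i.val + 1, by have := i.isLt; omega⟩

/-- The channel information matrix `H(W)`  (division by `0` yields `0` in Lean,
matching the convention that terms with zero denominator vanish). -/
noncomputable def HMat (k : ℕ) {𝒴 : Type*} [Fintype 𝒴] (W : Fin (2 * k) → 𝒴 → ℝ) :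
    Matrix (Fin k) (Fin k) ℝ := fun i j =>
  ∑ y, (W (lo i) y - W (hi i) y) * (W (lo j) y - W (hi j) y) / (∑ x, W x y)

/-- Nuclear norm of a real symmetric matrix (sum of absolute values of eigenvalues). -/
noncomputable def nucNorm {k : ℕ} (A : Matrix (Fin k) (Fin k) ℝ) : ℝ :=
  if h : A.IsHermitian then ∑ i, |h.eigenvalues i| else 0

/-- Operator (spectral) norm of a real symmetric matrix. -/
noncomputable def opNorm {k : ℕ} (A : Matrix (Fin k) (Fin k) ℝ) : ℝ :=
  if h : A.IsHermitian then ⨆ i, |h.eigenvalues i| else 0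

/-- Frobenius norm of a matrix. -/
noncomputable def frobNorm {k : ℕ} (A : Matrix (Fin k) (Fin k) ℝ) : ℝ :=
  Real.sqrt (∑ i, ∑ j, (A i j) ^ 2)

/-- `‖𝒲‖_*`, the maximal nuclear norm of `H(W)` over the family. -/
noncomputable def famNuc (k : ℕ) {𝒴 : Type*} [Fintype 𝒴]
    (𝒲 : Set (Fin (2 * k) → 𝒴 → ℝ)) : ℝ :=
  sSup ((fun W => nucNorm (HMat k W)) '' 𝒲)

/-- `‖𝒲‖_op`, the maximal operator norm of `H(W)` over the family. -/
noncomputable def famOp (k : ℕ) {𝒴 : Type*} [Fintype 𝒴]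
    (𝒲 : Set (Fin (2 * k) → 𝒴 → ℝ)) : ℝ :=
  sSup ((fun W => opNorm (HMat k W)) '' 𝒲)

/-- `‖𝒲‖_F`, the maximal Frobenius norm of `H(W)` over the family. -/
noncomputable def famFrob (k : ℕ) {𝒴 : Type*} [Fintype 𝒴]
    (𝒲 : Set (Fin (2 * k) → 𝒴 → ℝ)) : ℝ :=
  sSup ((fun W => frobNorm (HMat k W)) '' 𝒲)

/-- A deterministic sequentially interactive protocol over `n` users: to each user `t`
and each message prefix it assigns a channel. -/
def Protocol (k n : ℕ) (𝒴 : Type*) : Type _ :=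
  (t : Fin n) → (Fin t.val → 𝒴) → Fin (2 * k) → 𝒴 → ℝ

/-- All channels used by the protocol belong to the family `𝒲`. -/
def UsesFamily {k n : ℕ} {𝒴 : Type*} (π : Protocol k n 𝒴)
    (𝒲 : Set (Fin (2 * k) → 𝒴 → ℝ)) : Prop :=
  ∀ t pre, π t pre ∈ 𝒲

/-- All kernels used by the protocol are genuine channels. -/
def ChannelProtocol {k n : ℕ} {𝒴 : Type*} [Fintype 𝒴] (π : Protocol k n 𝒴) : Prop :=
  ∀ t pre, IsChannel (π t pre)

/-- Distribution of the first `t` messages of the transcript when the inputs are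
i.i.d. with law `p`. -/
noncomputable def prefixDist {k n : ℕ} {𝒴 : Type*} [Fintype 𝒴] (π : Protocol k n 𝒴)
    (p : Fin (2 * k) → ℝ) (t : ℕ) (ht : t ≤ n) (y : Fin t → 𝒴) : ℝ :=
  ∏ s : Fin t, ∑ x, p x *
    π ⟨s.val, lt_of_lt_of_le s.isLt ht⟩ (fun r => y ⟨r.val, lt_trans r.isLt s.isLt⟩) x (y s)

/-- Distribution of the full transcript `Y^n` when the inputs are i.i.d. with law `p`. -/
noncomputable def transDist {k n : ℕ} {𝒴 : Type*} [Fintype 𝒴] (π : Protocol k n 𝒴)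
    (p : Fin (2 * k) → ℝ) (y : Fin n → 𝒴) : ℝ :=
  prefixDist π p n le_rfl y

/-- The uniform distribution on `[2k]`. -/
noncomputable def uniform2k (k : ℕ) : Fin (2 * k) → ℝ := fun _ => (2 * (k : ℝ))⁻¹

/-- An `(n, ε)`-estimator using `𝒲`: a public-coin sequentially interactive protocol
(seed distribution `μ`, protocols `π u`, channels from `𝒲`) together with an estimator
`est` such that, for every input distribution `p`, the probability that the estimate is
more than `ε` away from `p` in total variation is at most `1/100`. -/
def IsEstimator {k n : ℕ} {𝒴 𝒰 : Type*} [Fintype 𝒴] [Fintype 𝒰]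
    (𝒲 : Set (Fin (2 * k) → 𝒴 → ℝ)) (μ : 𝒰 → ℝ) (π : 𝒰 → Protocol k n 𝒴)
    (est : (Fin n → 𝒴) → 𝒰 → Fin (2 * k) → ℝ) (ε : ℝ) : Prop :=
  IsDist μ ∧ (∀ u, UsesFamily (π u) 𝒲) ∧ (∀ u, ChannelProtocol (π u)) ∧
  (∀ y u, IsDist (est y u)) ∧
  ∀ p : Fin (2 * k) → ℝ, IsDist p →
    (∑ u, ∑ y : Fin n → 𝒴, μ u * (transDist (π u) p y *
      (if ε < tvDist (est y u) p then (1 : ℝ) else 0))) ≤ 1 / 100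

/-- An `(n, ε)`-uniformity test using `𝒲`: a public-coin sequentially interactive
protocol together with a randomized decision rule `T` (probability of output `1`)
accepting uniform and rejecting `ε`-far distributions with probability `99/100`. -/
def IsUnifTest {k n : ℕ} {𝒴 𝒰 : Type*} [Fintype 𝒴] [Fintype 𝒰]
    (𝒲 : Set (Fin (2 * k) → 𝒴 → ℝ)) (μ : 𝒰 → ℝ) (π : 𝒰 → Protocol k n 𝒴)
    (T : (Fin n → 𝒴) → 𝒰 → ℝ) (ε : ℝ) : Prop :=
  IsDist μ ∧ (∀ u, UsesFamily (π u) 𝒲) ∧ (∀ u, ChannelProtocol (π u)) ∧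
  (∀ y u, T y u ∈ Set.Icc (0 : ℝ) 1) ∧
  (99 / 100 ≤ ∑ u, ∑ y : Fin n → 𝒴, μ u * (transDist (π u) (uniform2k k) y * (1 - T y u))) ∧
  ∀ p : Fin (2 * k) → ℝ, IsDist p → ε ≤ tvDist p (uniform2k k) →
    99 / 100 ≤ ∑ u, ∑ y : Fin n → 𝒴, μ u * (transDist (π u) p y * T y u)

/-- Mutual information (in nats) of a joint mass function on `A × B`. -/
noncomputable def miNats {A B : Type*} [Fintype A] [Fintype B] (j : A → B → ℝ) : ℝ :=
  ∑ a, ∑ b, j a b * Real.log (j a b / ((∑ b', j a b') * (∑ a', j a' b)))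

/-- Mutual information (in bits) of a joint mass function on `A × B`. -/
noncomputable def miBits {A B : Type*} [Fintype A] [Fintype B] (j : A → B → ℝ) : ℝ :=
  ∑ a, ∑ b, j a b * Real.logb 2 (j a b / ((∑ b', j a b') * (∑ a', j a' b)))

/-- Binary entropy function (in bits). -/
noncomputable def binEnt (t : ℝ) : ℝ :=
  -(t * Real.logb 2 t) - (1 - t) * Real.logb 2 (1 - t)

/-- `±1` encoding of a Boolean. -/
def pm (b : Bool) : ℝ := if b then 1 else -1

/-- The joint mass function of `(Z_i, Y)` obtained from a joint mass function of `(Z, Y)`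
for `Z ∈ {−1,+1}^k` (encoded via Booleans). -/
noncomputable def coordJoint {k : ℕ} {𝒴 : Type*} [Fintype 𝒴]
    (j : (Fin k → Bool) → 𝒴 → ℝ) (i : Fin k) : Bool → 𝒴 → ℝ :=
  fun b y => ∑ z : Fin k → Bool, if z i = b then j z y else 0

/-- The Paninski perturbation `p_z` of the uniform distribution on `[2k]`:
`p_z(2i−1) = (1+2ε z_i)/(2k)` and `p_z(2i) = (1−2ε z_i)/(2k)` (1-indexed). -/
noncomputable def paninski (k : ℕ) (ε : ℝ) (z : Fin k → Bool) : Fin (2 * k) → ℝ :=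
  fun x => (1 + (if x.val % 2 = 0 then (1 : ℝ) else -1) * (2 * ε) *
    pm (z ⟨x.val / 2, by have := x.isLt; omega⟩)) / (2 * k)

/-- Chi-square divergence between mass functions on a finite type. -/
noncomputable def chiSq {α : Type*} [Fintype α] (P Q : α → ℝ) : ℝ :=
  ∑ y, (P y - Q y) ^ 2 / Q y

/-- Kullback–Leibler divergence (in nats) between mass functions on a finite type. -/
noncomputable def klDivNats {α : Type*} [Fintype α] (P Q : α → ℝ) : ℝ :=
  ∑ y, P y * Real.log (P y / Q y)

/-- The leaky-query channel `W_u^η` on output alphabet `[2k] ∪ {1*, 0*}`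
(`Sum.inr true = 1*`, `Sum.inr false = 0*`). -/
noncomputable def leaky (k : ℕ) (η : ℝ) (u : Fin (2 * k) → ℝ) :
    Fin (2 * k) → (Fin (2 * k) ⊕ Bool) → ℝ :=
  fun x y => Sum.elim (fun x' => if x' = x then η else 0)
    (fun b => if b then (1 - η) * u x else (1 - η) * (1 - u x)) y

/-- The vector `δ(u)` associated with a leaky-query channel. -/
noncomputable def leakyDelta (k : ℕ) (u : Fin (2 * k) → ℝ) : Fin k → ℝ :=
  fun i => (u (lo i) - u (hi i)) *
    Real.sqrt ((2 * (k : ℝ)) / ((∑ x, u x) * (2 * (k : ℝ) - ∑ x, u x)))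

/-- The partial-erasure channel `W_{x*}` on output alphabet `[2k] ∪ {⊥}`. -/
noncomputable def eraseCh (k : ℕ) (η : ℝ) (xs : Fin (2 * k)) :
    Fin (2 * k) → (Fin (2 * k) ⊕ Unit) → ℝ :=
  fun x y => Sum.elim (fun x' => if x' = x then (if x = xs then 1 else η) else 0)
    (fun _ => if x = xs then 0 else 1 - η) y

/-- The family of all `ρ`-locally differentially private channels from `[2k]` to `𝒴`. -/
def ldpFamily (k : ℕ) {𝒴 : Type*} [Fintype 𝒴] (ρ : ℝ) :
    Set (Fin (2 * k) → 𝒴 → ℝ) :=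
  { W | IsChannel W ∧ ∀ x x' y, W x y ≤ Real.exp ρ * W x' y }
/-!
Fix a prefix `y^t`, let `W` be the channel the protocol uses next, `q(z, y^t)` the joint law of
`(Z, Y^t)`, `q(y^t) = Σ_z q(z, y^t)` and `α_i = Σ_z z_i q(z, y^t)`. Since
`p_z = u + (ε/k) Σ_i z_i (e_{2i-1} - e_{2i})`, the joint law of `(Y^t, Y_{t+1})` is
`q(y^t) u(·|y^t) + (ε/k) Σ_i α_i (W(·|2i-1) - W(·|2i))`. Bounding KL by χ², the divergence at
`y^t` is at most `2ε²/(k q(y^t)) · αᵀ H(W) α ≤ 2ε²/(k q(y^t)) · ‖H(W)‖_op · |α|²`.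
Finally `(α_i / q(y^t))` is the bias `2 P(Z_i = 1 | y^t) - 1` of the uniform bit `Z_i`, so by
Pinsker's inequality `Σ_{y^t} α_i² / q(y^t) ≤ 2 I(Z_i; Y^t)` in nats.
-/

section Pairing

variable {k : ℕ}

lemma sum_lo_add_hi {M : Type*} [AddCommMonoid M] (g : Fin (2 * k) → M) :
    ∑ x, g x = ∑ i, (g (lo i) + g (hi i)) := by
  rw [← (finProdFinEquiv.trans (finCongr (mul_comm k 2))).sum_comp, Fintype.sum_prod_type]
  refine sum_congr rfl fun i _ => ?_
  rw [Fin.sum_univ_two]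
  congr 2 <;> ext <;> simp [lo, hi, add_comm]

lemma apply_lo_add_apply_hi_le_sum {g : Fin (2 * k) → ℝ} (hg : ∀ x, 0 ≤ g x) (i : Fin k) :
    g (lo i) + g (hi i) ≤ ∑ x, g x := by
  rw [sum_lo_add_hi]
  exact single_le_sum (fun j _ => add_nonneg (hg _) (hg _)) (mem_univ i)

end Pairing

section Paninski

variable {k : ℕ} {ε : ℝ}

lemma abs_pm (b : Bool) : |pm b| = 1 := by cases b <;> simp [pm]

lemma paninski_lo (z : Fin k → Bool) (i : Fin k) :
    paninski k ε z (lo i) = (1 + 2 * ε * pm (z i)) / (2 * k) := by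
  simp [paninski, lo]

lemma paninski_hi (z : Fin k → Bool) (i : Fin k) :
    paninski k ε z (hi i) = (1 - 2 * ε * pm (z i)) / (2 * k) := by
  have h : (2 * i.val + 1) / 2 = i.val := by omega
  simp [paninski, hi, h]
  ring

lemma paninski_mem_Icc (hε : |ε| ≤ 1 / 2) (z : Fin k → Bool) (x : Fin (2 * k)) :
    paninski k ε z x ∈ Set.Icc 0 (2 * uniform2k k x) := by
  have h : |(if x.val % 2 = 0 then (1 : ℝ) else -1) * (2 * ε) * pm (z ⟨x.val / 2, by omega⟩)|
      ≤ 1 := by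
    rw [abs_mul, abs_mul, abs_pm, abs_mul]
    split_ifs <;> simp <;> linarith
  rw [abs_le] at h
  refine ⟨div_nonneg (by linarith) (by positivity), ?_⟩
  rw [paninski, uniform2k, div_eq_mul_inv]
  exact mul_le_mul_of_nonneg_right (by linarith) (by positivity)

lemma sum_paninski (hk : 1 ≤ k) (z : Fin k → Bool) : ∑ x, paninski k ε z x = 1 := by
  calc ∑ x, paninski k ε z x = ∑ _i : Fin k, (k : ℝ)⁻¹ := by
        rw [sum_lo_add_hi]
        refine sum_congr rfl fun i _ => ?_
        rw [paninski_lo, paninski_hi]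
        ring
    _ = 1 := by
        have : (k : ℝ) ≠ 0 := by positivity
        simp [this]

lemma paninski_isDist (hk : 1 ≤ k) (hε : |ε| ≤ 1 / 2) (z : Fin k → Bool) :
    IsDist (paninski k ε z) :=
  ⟨fun x => (paninski_mem_Icc hε z x).1, sum_paninski hk z⟩

end Paninski

noncomputable def outDist {α 𝒴 : Type*} [Fintype α] (p : α → ℝ) (W : α → 𝒴 → ℝ) (y : 𝒴) : ℝ :=
  ∑ x, p x * W x y

def pairDiff {k : ℕ} {𝒴 : Type*} (W : Fin (2 * k) → 𝒴 → ℝ) (i : Fin k) (y : 𝒴) : ℝ :=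
  W (lo i) y - W (hi i) y

section Transcript

variable {α 𝒴 : Type*} [Fintype α] [Fintype 𝒴]

lemma outDist_nonneg {p : α → ℝ} (hp : ∀ x, 0 ≤ p x) {W : α → 𝒴 → ℝ} (hW : IsChannel W)
    (y : 𝒴) : 0 ≤ outDist p W y :=
  sum_nonneg fun x _ => mul_nonneg (hp x) ((hW x).1 y)

lemma sum_outDist (p : α → ℝ) {W : α → 𝒴 → ℝ} (hW : IsChannel W) :
    ∑ y, outDist p W y = ∑ x, p x := by
  simp only [outDist]
  rw [sum_comm]
  simp [← mul_sum, (hW _).2]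

variable {k n : ℕ}

lemma prefixDist_snoc (π : Protocol k n 𝒴) (p : Fin (2 * k) → ℝ) {t : ℕ} (ht : t < n)
    (ys : Fin t → 𝒴) (y : 𝒴) :
    prefixDist π p (t + 1) ht (Fin.snoc ys y) =
      prefixDist π p t ht.le ys * outDist p (π ⟨t, ht⟩ ys) y := by
  have hlt (s : Fin t) (r : Fin s) : (r : ℕ) < t := r.isLt.trans s.isLt
  simp [prefixDist, Fin.prod_univ_castSucc, outDist, Fin.snoc, Fin.castLT, hlt]

lemma prefixDist_nonneg {π : Protocol k n 𝒴} (hπ : ChannelProtocol π) {p : Fin (2 * k) → ℝ}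
    (hp : ∀ x, 0 ≤ p x) (t : ℕ) (ht : t ≤ n) (ys : Fin t → 𝒴) : 0 ≤ prefixDist π p t ht ys :=
  prod_nonneg fun _ _ => outDist_nonneg hp (hπ _ _) _

lemma sum_prefixDist {π : Protocol k n 𝒴} (hπ : ChannelProtocol π) {p : Fin (2 * k) → ℝ}
    (hp : IsDist p) : ∀ (t : ℕ) (ht : t ≤ n), ∑ ys, prefixDist π p t ht ys = 1
  | 0, ht => by simp [prefixDist]
  | t + 1, ht => by
    rw [← (Fin.snocEquiv fun _ => 𝒴).sum_comp, Fintype.sum_prod_type, sum_comm]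
    refine (sum_congr rfl fun ys _ => ?_).trans (sum_prefixDist hπ hp t (Nat.le_of_succ_le ht))
    change ∑ y, prefixDist π p (t + 1) ht (Fin.snoc ys y) = _
    rw [← mul_one (prefixDist π p t _ ys), ← hp.2, ← sum_outDist p (hπ ⟨t, ht⟩ ys), mul_sum]
    exact sum_congr rfl fun y _ => prefixDist_snoc π p ht ys y

end Transcript

section Spectral

open scoped Matrix

variable {k : ℕ}

lemma opNorm_nonneg (A : Matrix (Fin k) (Fin k) ℝ) : 0 ≤ opNorm A := by
  rw [opNorm]
  split_ifs
  exacts [Real.iSup_nonneg fun _ => abs_nonneg _, le_rfl]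

lemma dotProduct_mulVec_le_opNorm_mul {A : Matrix (Fin k) (Fin k) ℝ} (hA : A.IsHermitian)
    (v : Fin k → ℝ) : v ⬝ᵥ A *ᵥ v ≤ opNorm A * (v ⬝ᵥ v) := by
  have hle (i : Fin k) : hA.eigenvalues i ≤ opNorm A := by
    rw [opNorm, dif_pos hA]
    exact (le_abs_self _).trans
      (le_ciSup (f := fun i => |hA.eigenvalues i|) (Set.finite_range _).bddAbove i)
  have hpsd : (algebraMap ℝ _ (opNorm A) - A).PosSemidef := by
    rw [Matrix.posSemidef_iff_isHermitian_and_spectrum_nonneg, ← spectrum.singleton_sub_eq,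
      hA.spectrum_real_eq_range_eigenvalues]
    refine ⟨(Matrix.isHermitian_diagonal _).sub hA, ?_⟩
    rintro _ ⟨_, rfl, _, ⟨i, rfl⟩, rfl⟩
    simpa using hle i
  simpa [Matrix.sub_mulVec, Algebra.algebraMap_eq_smul_one, Matrix.smul_mulVec,
    dotProduct_smul] using hpsd.dotProduct_mulVec_nonneg v

lemma abs_eigenvalues_le {A : Matrix (Fin k) (Fin k) ℝ} (hA : A.IsHermitian) {C : ℝ}
    (hC : ∀ i j, |A i j| ≤ C) (i : Fin k) : |hA.eigenvalues i| ≤ k * C := by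
  have hev : Module.End.HasEigenvalue (Matrix.toLin' A) (hA.eigenvalues i) :=
    Module.End.hasEigenvalue_of_hasEigenvector
      ⟨Module.End.mem_eigenspace_iff.2 (by simpa using hA.mulVec_eigenvectorBasis i),
        by simpa using hA.eigenvectorBasis.orthonormal.ne_zero i⟩
  obtain ⟨m, hm⟩ := eigenvalue_mem_ball hev
  rw [Metric.mem_closedBall, Real.dist_eq] at hm
  calc |hA.eigenvalues i| ≤ |A m m| + ∑ j ∈ univ.erase m, |A m j| := by
        have := abs_add_le (hA.eigenvalues i - A m m) (A m m)
        simp only [sub_add_cancel, Real.norm_eq_abs] at this hm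
        linarith
    _ = ∑ j, |A m j| := add_sum_erase _ (fun j => |A m j|) (mem_univ m)
    _ ≤ ∑ _j : Fin k, C := sum_le_sum fun j _ => hC m j
    _ = k * C := by simp

lemma opNorm_le_of_abs_le {A : Matrix (Fin k) (Fin k) ℝ} (hA : A.IsHermitian) {C : ℝ}
    (hC : ∀ i j, |A i j| ≤ C) : opNorm A ≤ k * C := by
  rw [opNorm, dif_pos hA]
  rcases Nat.eq_zero_or_pos k with rfl | hk
  · simp
  · have : Nonempty (Fin k) := ⟨⟨0, hk⟩⟩
    exact ciSup_le (abs_eigenvalues_le hA hC)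

variable {𝒴 : Type*} [Fintype 𝒴]

lemma HMat_isHermitian (W : Fin (2 * k) → 𝒴 → ℝ) : (HMat k W).IsHermitian :=
  Matrix.IsHermitian.ext fun i j => by
    simp only [HMat, star_trivial]
    exact sum_congr rfl fun y _ => by ring

lemma abs_HMat_apply_le_two {W : Fin (2 * k) → 𝒴 → ℝ} (hW : IsChannel W) (i j : Fin k) :
    |HMat k W i j| ≤ 2 := by
  have hS (y : 𝒴) : 0 ≤ ∑ x, W x y := sum_nonneg fun x _ => (hW x).1 y
  have hΔ (i : Fin k) (y : 𝒴) : |pairDiff W i y| ≤ W (lo i) y + W (hi i) y := by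
    rw [pairDiff, abs_le]
    constructor <;> linarith [(hW (lo i)).1 y, (hW (hi i)).1 y]
  have hterm (y : 𝒴) :
      |pairDiff W i y * pairDiff W j y / ∑ x, W x y| ≤ W (lo i) y + W (hi i) y := by
    rw [abs_div, abs_mul, abs_of_nonneg (hS y)]
    have hΔj := (hΔ j y).trans (apply_lo_add_apply_hi_le_sum (fun x => (hW x).1 y) j)
    exact div_le_of_le_mul₀ (hS y) ((abs_nonneg _).trans (hΔ i y))
      (mul_le_mul (hΔ i y) hΔj (abs_nonneg _) ((abs_nonneg _).trans (hΔ i y)))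
  calc |HMat k W i j| ≤ ∑ y, |pairDiff W i y * pairDiff W j y / ∑ x, W x y| :=
        abs_sum_le_sum_abs _ _
    _ ≤ ∑ y, (W (lo i) y + W (hi i) y) := sum_le_sum fun y _ => hterm y
    _ = 2 := by rw [sum_add_distrib, (hW _).2, (hW _).2]; norm_num

lemma opNorm_HMat_le_famOp {𝒲 : Set (Fin (2 * k) → 𝒴 → ℝ)} (h𝒲 : ∀ W ∈ 𝒲, IsChannel W)
    {W : Fin (2 * k) → 𝒴 → ℝ} (hW : W ∈ 𝒲) : opNorm (HMat k W) ≤ famOp k 𝒲 := by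
  refine le_csSup ⟨k * 2, ?_⟩ ⟨W, hW, rfl⟩
  rintro _ ⟨V, hV, rfl⟩
  exact opNorm_le_of_abs_le (HMat_isHermitian V) (abs_HMat_apply_le_two (h𝒲 V hV))

lemma famOp_nonneg (𝒲 : Set (Fin (2 * k) → 𝒴 → ℝ)) : 0 ≤ famOp k 𝒲 :=
  Real.sSup_nonneg <| by rintro _ ⟨W, -, rfl⟩; exact opNorm_nonneg _

end Spectral

lemma klDivNats_le_chiSq {α : Type*} [Fintype α] {P Q : α → ℝ} (hP : ∀ y, 0 ≤ P y)
    (hQ : ∀ y, 0 ≤ Q y) (hPQ : ∀ y, Q y = 0 → P y = 0) (hsum : ∑ y, P y = ∑ y, Q y) :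
    klDivNats P Q ≤ chiSq P Q := by
  have key (y : α) : P y * Real.log (P y / Q y) ≤ (P y - Q y) ^ 2 / Q y + (P y - Q y) := by
    rcases (hQ y).eq_or_lt with hQ0 | hQ0
    · simp [← hQ0, hPQ y hQ0.symm]
    rcases (hP y).eq_or_lt with hP0 | hP0
    · simp [← hP0, sq, mul_self_div_self]
    calc P y * Real.log (P y / Q y) ≤ P y * (P y / Q y - 1) :=
          mul_le_mul_of_nonneg_left (Real.log_le_sub_one_of_pos (by positivity)) hP0.le
      _ = (P y - Q y) ^ 2 / Q y + (P y - Q y) := by field_simp; ring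
  calc klDivNats P Q ≤ ∑ y, ((P y - Q y) ^ 2 / Q y + (P y - Q y)) := sum_le_sum fun y _ => key y
    _ = chiSq P Q := by rw [sum_add_distrib, sum_sub_distrib, hsum, sub_self, add_zero, chiSq]

section Mixture

variable {k : ℕ} {𝒴 : Type*}

def coordCorr (w : (Fin k → Bool) → ℝ) (i : Fin k) : ℝ :=
  ∑ z, pm (z i) * w z

lemma outDist_paninski (ε : ℝ) (z : Fin k → Bool) (W : Fin (2 * k) → 𝒴 → ℝ) (y : 𝒴) :
    outDist (paninski k ε z) W y =
      outDist (uniform2k k) W y + ε / k * ∑ i, pm (z i) * pairDiff W i y := by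
  simp only [outDist]
  rw [sum_lo_add_hi, sum_lo_add_hi, mul_sum, ← sum_add_distrib]
  refine sum_congr rfl fun i _ => ?_
  simp only [paninski_lo, paninski_hi, uniform2k, pairDiff]
  ring

lemma sum_mul_outDist_paninski (ε : ℝ) (w : (Fin k → Bool) → ℝ) (W : Fin (2 * k) → 𝒴 → ℝ)
    (y : 𝒴) :
    ∑ z, w z * outDist (paninski k ε z) W y =
      (∑ z, w z) * outDist (uniform2k k) W y + ε / k * ∑ i, coordCorr w i * pairDiff W i y := by
  simp only [outDist_paninski, mul_add, sum_add_distrib, sum_mul, coordCorr, mul_sum]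
  congr 1
  rw [sum_comm]
  exact sum_congr rfl fun i _ => sum_congr rfl fun z _ => by ring

end Mixture

section ChiSquare

open scoped Matrix

variable {k : ℕ} {𝒴 : Type*} [Fintype 𝒴]

lemma sum_pairDiff {W : Fin (2 * k) → 𝒴 → ℝ} (hW : IsChannel W) (i : Fin k) :
    ∑ y, pairDiff W i y = 0 := by
  simp [pairDiff, sum_sub_distrib, (hW _).2]

lemma sum_sq_div_eq_dotProduct_HMat_mulVec (W : Fin (2 * k) → 𝒴 → ℝ) (v : Fin k → ℝ) :
    ∑ y, (∑ i, v i * pairDiff W i y) ^ 2 / ∑ x, W x y = v ⬝ᵥ HMat k W *ᵥ v := by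
  simp only [dotProduct, Matrix.mulVec, HMat, sq, sum_div, mul_sum, sum_mul]
  rw [sum_comm]
  refine sum_congr rfl fun i _ => ?_
  rw [sum_comm]
  refine sum_congr rfl fun j _ => sum_congr rfl fun y _ => ?_
  simp only [pairDiff]
  ring

lemma chiSq_mixture_eq (ε : ℝ) (w : (Fin k → Bool) → ℝ) (W : Fin (2 * k) → 𝒴 → ℝ) :
    chiSq (fun y => ∑ z, w z * outDist (paninski k ε z) W y)
        (fun y => (∑ z, w z) * outDist (uniform2k k) W y)
      = 2 * ε ^ 2 / k / (∑ z, w z) * (coordCorr w ⬝ᵥ HMat k W *ᵥ coordCorr w) := by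
  rw [← sum_sq_div_eq_dotProduct_HMat_mulVec, chiSq, mul_sum]
  refine sum_congr rfl fun y _ => ?_
  rw [sum_mul_outDist_paninski, add_sub_cancel_left]
  simp only [outDist, uniform2k, ← mul_sum]
  rcases eq_or_ne (k : ℝ) 0 with hk | hk
  · simp [hk] -- both sides are `0` through division by `0`
  · field_simp

lemma sum_mul_outDist_paninski_le {ε : ℝ} (hε : |ε| ≤ 1 / 2) {W : Fin (2 * k) → 𝒴 → ℝ}
    (hW : IsChannel W) {w : (Fin k → Bool) → ℝ} (hw : ∀ z, 0 ≤ w z) (y : 𝒴) :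
    ∑ z, w z * outDist (paninski k ε z) W y ≤ 2 * ((∑ z, w z) * outDist (uniform2k k) W y) := by
  rw [sum_mul, mul_sum]
  refine sum_le_sum fun z _ => ?_
  rw [mul_left_comm]
  refine mul_le_mul_of_nonneg_left ?_ (hw z)
  rw [outDist, outDist, mul_sum]
  refine sum_le_sum fun x _ => ?_
  rw [← mul_assoc]
  exact mul_le_mul_of_nonneg_right (paninski_mem_Icc hε z x).2 ((hW x).1 y)

lemma klDivNats_mixture_le {ε : ℝ} (hε : |ε| ≤ 1 / 2) {W : Fin (2 * k) → 𝒴 → ℝ}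
    (hW : IsChannel W) {w : (Fin k → Bool) → ℝ} (hw : ∀ z, 0 ≤ w z) :
    klDivNats (fun y => ∑ z, w z * outDist (paninski k ε z) W y)
        (fun y => (∑ z, w z) * outDist (uniform2k k) W y)
      ≤ 2 * ε ^ 2 / k * opNorm (HMat k W) * (∑ i, coordCorr w i ^ 2) / ∑ z, w z := by
  have hQ (y : 𝒴) : 0 ≤ ∑ z, w z * outDist (paninski k ε z) W y :=
    sum_nonneg fun z _ => mul_nonneg (hw z) (outDist_nonneg (paninski_mem_Icc hε z · |>.1) hW y)
  have hqu (y : 𝒴) : 0 ≤ (∑ z, w z) * outDist (uniform2k k) W y :=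
    mul_nonneg (sum_nonneg fun z _ => hw z) (outDist_nonneg (fun _ => by simp [uniform2k]) hW y)
  have hsum : ∑ y, ∑ z, w z * outDist (paninski k ε z) W y =
      ∑ y, (∑ z, w z) * outDist (uniform2k k) W y := by
    simp only [sum_mul_outDist_paninski, sum_add_distrib, ← mul_sum, sum_comm (γ := 𝒴),
      sum_pairDiff hW, mul_zero, sum_const_zero, add_zero]
  calc _ ≤ chiSq (fun y => ∑ z, w z * outDist (paninski k ε z) W y)
        (fun y => (∑ z, w z) * outDist (uniform2k k) W y) :=
        klDivNats_le_chiSq hQ hqu (fun y h => le_antisymm (by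
          simpa [h] using sum_mul_outDist_paninski_le hε hW hw y) (hQ y)) hsum
    _ = 2 * ε ^ 2 / k / (∑ z, w z) * (coordCorr w ⬝ᵥ HMat k W *ᵥ coordCorr w) :=
        chiSq_mixture_eq ε w W
    _ ≤ 2 * ε ^ 2 / k / (∑ z, w z) * (opNorm (HMat k W) * (coordCorr w ⬝ᵥ coordCorr w)) :=
        mul_le_mul_of_nonneg_left (dotProduct_mulVec_le_opNorm_mul (HMat_isHermitian W) _)
          (div_nonneg (by positivity) (sum_nonneg fun z _ => hw z))
    _ = _ := by
        simp only [dotProduct, sq]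
        ring

end ChiSquare

section Pinsker

open Real InformationTheory

lemma sq_le_klFun_one_add_add_klFun_one_sub {r : ℝ} (hr : |r| ≤ 1) :
    r ^ 2 ≤ klFun (1 + r) + klFun (1 - r) := by
  wlog h0 : 0 ≤ r generalizing r
  · have := this (r := -r) (by rwa [abs_neg]) (by linarith)
    rwa [neg_sq, ← sub_eq_add_neg, sub_neg_eq_add, add_comm (klFun _)] at this
  let φ (x : ℝ) : ℝ := klFun (1 + x) + klFun (1 - x) - x ^ 2
  have hφ (x : ℝ) (hx : x ∈ Set.Ioo (0 : ℝ) 1) :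
      HasDerivAt φ (log (1 + x) - log (1 - x) - 2 * x) x := by
    have hadd := (hasDerivAt_klFun (x := 1 + x) (by linarith [hx.1])).comp x
      ((hasDerivAt_id x).const_add 1)
    have hsub := (hasDerivAt_klFun (x := 1 - x) (by linarith [hx.2])).comp x
      ((hasDerivAt_id x).const_sub 1)
    exact ((hadd.add hsub).sub (hasDerivAt_pow 2 x)).congr_deriv (by simp; ring)
  have hmono : MonotoneOn φ (Set.Icc 0 1) := by
    refine monotoneOn_of_hasDerivWithinAt_nonneg (f' := fun x => log (1 + x) - log (1 - x) - 2 * x)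
      (convex_Icc 0 1) (by fun_prop)
      (fun x hx => ?_) (fun x hx => ?_) <;> rw [interior_Icc] at hx
    · exact (hφ x hx).hasDerivWithinAt
    · have h1 : 0 < 1 - x := by linarith [hx.2]
      have := sum_range_le_log_div hx.1.le hx.2 1
      rw [log_div (by linarith [hx.1]) h1.ne'] at this
      simp at this
      linarith
  have := hmono ⟨le_rfl, zero_le_one⟩ ⟨h0, (le_abs_self r).trans hr⟩ h0
  simp [φ, klFun_one] at this
  linarith

lemma binary_pinsker {a b : ℝ} (ha : 0 ≤ a) (hb : 0 ≤ b) :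
    (a - b) ^ 2 / (a + b) ≤
      2 * (a * log (a / (1 / 2 * (a + b))) + b * log (b / (1 / 2 * (a + b)))) := by
  rcases (add_nonneg ha hb).eq_or_lt with hs | hs
  · obtain ⟨rfl, rfl⟩ : a = 0 ∧ b = 0 := ⟨by linarith, by linarith⟩
    simp
  set r := (a - b) / (a + b) with hr_def
  have hr : |r| ≤ 1 := by
    rw [abs_div, abs_of_pos hs, div_le_one hs]
    exact abs_sub_le_of_nonneg_of_le ha (by linarith) hb (by linarith)
  have ea : a / (1 / 2 * (a + b)) = 1 + r := by rw [hr_def]; field_simp; ring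
  have eb : b / (1 / 2 * (a + b)) = 1 - r := by rw [hr_def]; field_simp; ring
  have e1 : (a + b) * (1 + r) = 2 * a := by rw [hr_def]; field_simp; ring
  have e2 : (a + b) * (1 - r) = 2 * b := by rw [hr_def]; field_simp; ring
  calc (a - b) ^ 2 / (a + b) = (a + b) * r ^ 2 := by rw [hr_def]; field_simp
    _ ≤ (a + b) * (klFun (1 + r) + klFun (1 - r)) :=
        mul_le_mul_of_nonneg_left (sq_le_klFun_one_add_add_klFun_one_sub hr) hs.le
    _ = _ := by
        rw [ea, eb, klFun_apply, klFun_apply]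
        linear_combination log (1 + r) * e1 + log (1 - r) * e2

end Pinsker

lemma sum_sq_sub_div_le_two_mul_miNats {T : Type*} [Fintype T] {J : Bool → T → ℝ}
    (hJ : ∀ b s, 0 ≤ J b s) (hJm : ∀ b, ∑ s, J b s = 1 / 2) :
    ∑ s, (J true s - J false s) ^ 2 / (J true s + J false s) ≤ 2 * miNats J := by
  rw [miNats, Fintype.sum_bool, ← sum_add_distrib, mul_sum]
  refine sum_le_sum fun s _ => ?_
  simp only [hJm, Fintype.sum_bool]
  exact binary_pinsker (hJ true s) (hJ false s)

lemma miBits_eq_miNats_div {A B : Type*} [Fintype A] [Fintype B] (j : A → B → ℝ) :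
    miBits j = miNats j / Real.log 2 := by
  simp only [miBits, miNats, sum_div, Real.logb, mul_div_assoc]


section CoordJoint

variable {k : ℕ} {T : Type*} [Fintype T]

lemma coordJoint_true_sub_false (j : (Fin k → Bool) → T → ℝ) (i : Fin k) (s : T) :
    coordJoint j i true s - coordJoint j i false s = coordCorr (fun z => j z s) i := by
  simp only [coordJoint, coordCorr, ← sum_sub_distrib]
  refine sum_congr rfl fun z _ => ?_
  cases z i <;> simp [pm]

lemma coordJoint_true_add_false (j : (Fin k → Bool) → T → ℝ) (i : Fin k) (s : T) :
    coordJoint j i true s + coordJoint j i false s = ∑ z, j z s := by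
  simp only [coordJoint, ← sum_add_distrib]
  refine sum_congr rfl fun z _ => ?_
  cases z i <;> simp

lemma sum_coordJoint {j : (Fin k → Bool) → T → ℝ} (hj : ∀ z, ∑ s, j z s = 1 / 2 ^ k)
    (i : Fin k) (b : Bool) : ∑ s, coordJoint j i b s = 1 / 2 := by
  calc ∑ s, coordJoint j i b s = ∑ z : Fin k → Bool, if z i = b then (1 / 2 ^ k : ℝ) else 0 := by
        simp only [coordJoint]
        rw [sum_comm]
        refine sum_congr rfl fun z _ => ?_
        split_ifs <;> simp [hj]
    _ = (2 ^ (k - 1) : ℕ) * (1 / 2 ^ k) := by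
        rw [sum_ite, sum_const_zero, add_zero, sum_const, nsmul_eq_mul, ← Fintype.piFinset_univ,
          Fintype.card_filter_piFinset_const_eq_of_mem _ _ (mem_univ b)]
        simp
    _ = 1 / 2 := by
        obtain ⟨m, rfl⟩ : ∃ m, k = m + 1 := ⟨k - 1, by have := i.isLt; omega⟩
        field_simp
        simp [pow_succ]

lemma sum_coordCorr_sq_div_le {j : (Fin k → Bool) → T → ℝ} (hj0 : ∀ z s, 0 ≤ j z s)
    (hj : ∀ z, ∑ s, j z s = 1 / 2 ^ k) (i : Fin k) :
    ∑ s, coordCorr (fun z => j z s) i ^ 2 / ∑ z, j z s ≤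
      2 * Real.log 2 * miBits (coordJoint j i) := by
  have h := sum_sq_sub_div_le_two_mul_miNats (J := coordJoint j i)
    (fun b s => sum_nonneg fun z _ => by split_ifs; exacts [hj0 z s, le_rfl]) (sum_coordJoint hj i)
  simp only [coordJoint_true_sub_false, coordJoint_true_add_false] at h
  rwa [miBits_eq_miNats_div, mul_assoc, mul_div_cancel₀ _ (Real.log_pos one_lt_two).ne']

end CoordJoint

lemma sum_klDivNats_mixture_le {k : ℕ} {𝒴 T : Type*} [Fintype 𝒴] [Fintype T] {ε : ℝ}
    (hε : |ε| ≤ 1 / 2) {W : T → Fin (2 * k) → 𝒴 → ℝ} (hW : ∀ s, IsChannel (W s)) {B : ℝ}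
    (hB0 : 0 ≤ B) (hB : ∀ s, opNorm (HMat k (W s)) ≤ B) {j : (Fin k → Bool) → T → ℝ}
    (hj0 : ∀ z s, 0 ≤ j z s) (hj : ∀ z, ∑ s, j z s = 1 / 2 ^ k) :
    ∑ s, klDivNats (fun y => ∑ z, j z s * outDist (paninski k ε z) (W s) y)
        (fun y => (∑ z, j z s) * outDist (uniform2k k) (W s) y)
      ≤ 4 * Real.log 2 * (ε ^ 2 / k) * B * ∑ i, miBits (coordJoint j i) := by
  calc _ ≤ ∑ s, 2 * ε ^ 2 / k * B * (∑ i, coordCorr (fun z => j z s) i ^ 2) / ∑ z, j z s := by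
        refine sum_le_sum fun s _ => (klDivNats_mixture_le hε (hW s) (hj0 · s)).trans ?_
        gcongr
        · exact sum_nonneg fun z _ => hj0 z s
        · exact hB s
    _ = 2 * ε ^ 2 / k * B * ∑ i, ∑ s, coordCorr (fun z => j z s) i ^ 2 / ∑ z, j z s := by
        simp only [mul_div_assoc, sum_div, ← mul_sum]
        rw [sum_comm]
    _ ≤ 2 * ε ^ 2 / k * B * ∑ i, 2 * Real.log 2 * miBits (coordJoint j i) := by
        gcongr with i
        exact sum_coordCorr_sq_div_le hj0 hj i
    _ = _ := by rw [← mul_sum]; ring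

theorem per_round_divergence_bound_general
    (k n : ℕ) (hk : 1 ≤ k) (ε : ℝ) (hε : 0 < ε) (hε' : ε ≤ 1 / 2)
    (𝒴 : Type) [Fintype 𝒴]
    (𝒲 : Set (Fin (2 * k) → 𝒴 → ℝ)) (h𝒲 : ∀ W ∈ 𝒲, IsChannel W)
    (π : Protocol k n 𝒴) (hπ : UsesFamily π 𝒲)
    (t : ℕ) (ht : t < n) :
    ∑ ys : Fin t → 𝒴, ∑ y : 𝒴,
        ((1 / 2 ^ k : ℝ) * ∑ z : Fin k → Bool,
            prefixDist π (paninski k ε z) (t + 1) ht (Fin.snoc ys y)) *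
          Real.log
            (((1 / 2 ^ k : ℝ) * ∑ z : Fin k → Bool,
                prefixDist π (paninski k ε z) (t + 1) ht (Fin.snoc ys y)) /
              (((1 / 2 ^ k : ℝ) * ∑ z : Fin k → Bool,
                  prefixDist π (paninski k ε z) t ht.le ys) *
                (∑ x, (2 * (k : ℝ))⁻¹ * π ⟨t, ht⟩ ys x y)))
      ≤ 4 * Real.log 2 * (ε ^ 2 / (k : ℝ)) * famOp k 𝒲 *
          ∑ i : Fin k, miBits (coordJoint
            (fun z ys => (1 / 2 ^ k : ℝ) * prefixDist π (paninski k ε z) t ht.le ys) i) := by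
  have hε₀ : |ε| ≤ 1 / 2 := abs_le.2 ⟨by linarith, hε'⟩
  have hπ' : ChannelProtocol π := fun s pre => h𝒲 _ (hπ s pre)
  have hp (z : Fin k → Bool) := paninski_isDist hk hε₀ z
  convert sum_klDivNats_mixture_le hε₀ (fun ys => hπ' ⟨t, ht⟩ ys) (famOp_nonneg 𝒲)
    (j := fun z ys => 1 / 2 ^ k * prefixDist π (paninski k ε z) t ht.le ys)
    (fun ys => opNorm_HMat_le_famOp h𝒲 (hπ ⟨t, ht⟩ ys))
    (fun z ys => mul_nonneg (by positivity) (prefixDist_nonneg hπ' (hp z).1 t ht.le ys))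
    (fun z => by rw [← mul_sum, sum_prefixDist hπ' (hp z) t ht.le, mul_one]) using 1
  refine sum_congr rfl fun ys _ => ?_
  simp only [klDivNats, prefixDist_snoc π _ ht, mul_sum _ _ (1 / 2 ^ k : ℝ), ← mul_assoc]
  rfl

/-- Per-round divergence bound: for a deterministic sequentially
interactive protocol using `𝒲`, with `Z` uniform on `{−1,+1}^k` and inputs i.i.d.
`p_Z` given `Z` (mixture transcript law `q`), for every `0 ≤ t ≤ n−1`,
`E_{Y^t∼q}[ KL( q(Y_{t+1} ∈ · | Y^t) ‖ u(· | Y^t) ) ]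
  ≤ 4 ln 2 · (ε²/k) · ‖𝒲‖_op · Σᵢ I(Z_i; Y^t)`,
where `u(·|y^t)` is the law of the next message for a uniform input, KL is in nats,
and the mutual information is in bits. The expected KL divergence is written as
`Σ_{y^t, y} q^{t+1}(y^t ⌢ y) ln( q^{t+1}(y^t ⌢ y) / (q^t(y^t) · u(y|y^t)) )`. -/
theorem per_round_divergence_bound
    (k n : ℕ) (hk : 1 ≤ k) (ε : ℝ) (hε : 0 < ε) (hε' : ε ≤ 1 / 2)
    (𝒴 : Type) [Fintype 𝒴]
    (𝒲 : Set (Fin (2 * k) → 𝒴 → ℝ)) (h𝒲 : ∀ W ∈ 𝒲, IsChannel W)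
    (π : Protocol k n 𝒴) (hπ : UsesFamily π 𝒲) (hch : ChannelProtocol π)
    (t : ℕ) (ht : t < n) :
    ∑ ys : Fin t → 𝒴, ∑ y : 𝒴,
        ((1 / 2 ^ k : ℝ) * ∑ z : Fin k → Bool,
            prefixDist π (paninski k ε z) (t + 1) ht (Fin.snoc ys y)) *
          Real.log
            (((1 / 2 ^ k : ℝ) * ∑ z : Fin k → Bool,
                prefixDist π (paninski k ε z) (t + 1) ht (Fin.snoc ys y)) /
              (((1 / 2 ^ k : ℝ) * ∑ z : Fin k → Bool,
                  prefixDist π (paninski k ε z) t ht.le ys) *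
                (∑ x, (2 * (k : ℝ))⁻¹ * π ⟨t, ht⟩ ys x y)))
      ≤ 4 * Real.log 2 * (ε ^ 2 / (k : ℝ)) * famOp k 𝒲 *
          ∑ i : Fin k, miBits (coordJoint
            (fun z ys => (1 / 2 ^ k : ℝ) * prefixDist π (paninski k ε z) t ht.le ys) i) :=
  per_round_divergence_bound_general k n hk ε hε hε' 𝒴 𝒲 h𝒲 π hπ t ht

end Paper
end

section
/- Let k ≥ 2, η ∈ (0,1), and x* ∈ [2k]. Then the channel information matrix of the partial-erasure channel W_{x*} is diagonal, with i-th diagonal entry equal to 1 + η + (1−η)/(2k−1) if x* ∈ {2i−1, 2i}, and equal to 2η otherwise. Consequently, for η = 1/√k, the family 𝒲_⊥^{1/√k} = {W_{x*} : x* ∈ [2k]} satisfies 2 ≤ ‖𝒲_⊥^{1/√k}‖_F ≤ 2√2, 2√k ≤ ‖𝒲_⊥^{1/√k}‖_* ≤ 2√k + 2, and 1 ≤ ‖𝒲_⊥^{1/√k}‖_op ≤ 2. -/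
open Finset

open Matrix in
theorem Matrix.IsHermitian.map_eigenvalues_diagonal {n : Type*} [Fintype n] [DecidableEq n]
    {d : n → ℝ} (hA : (diagonal d).IsHermitian) :
    univ.val.map hA.eigenvalues = univ.val.map d := by
  have h := hA.roots_charpoly_eq_eigenvalues
  rw [charpoly_diagonal, Polynomial.roots_prod _ _
    (by simp [Finset.prod_ne_zero_iff, Polynomial.X_sub_C_ne_zero])] at h
  simpa using h.symm

theorem Fintype.sum_eq_add_card_sub_one_mul {ι R : Type*} [Fintype ι] [CommRing R]
    (f : ι → R) (i₀ : ι) (b : R) (hf : ∀ i ≠ i₀, f i = b) :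
    ∑ i, f i = f i₀ + (Fintype.card ι - 1) * b := by
  classical
  rw [Fintype.sum_eq_add_sum_compl i₀, Finset.sum_congr rfl fun i hi => hf i (by simpa using hi),
    sum_const, card_compl, card_singleton, nsmul_eq_mul,
    Nat.cast_sub (Fintype.card_pos_iff.2 ⟨i₀⟩)]
  simp

theorem csSup_image_mem_Icc {α : Type*} {s : Set α} (hs : s.Nonempty) {F : α → ℝ} {L U : ℝ}
    (hF : ∀ x ∈ s, F x ∈ Set.Icc L U) : sSup (F '' s) ∈ Set.Icc L U := by
  obtain ⟨x, hx⟩ := hs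
  have hbdd : BddAbove (F '' s) := ⟨U, Set.forall_mem_image.2 fun y hy => (hF y hy).2⟩
  exact ⟨le_csSup_of_le hbdd (Set.mem_image_of_mem F hx) (hF x hx).1,
    csSup_le ⟨_, Set.mem_image_of_mem F hx⟩ (Set.forall_mem_image.2 fun y hy => (hF y hy).2)⟩

namespace Paper

variable {k : ℕ}

theorem nucNorm_diagonal (d : Fin k → ℝ) : nucNorm (Matrix.diagonal d) = ∑ i, |d i| := by
  have hA := Matrix.isHermitian_diagonal d
  rw [nucNorm, dif_pos hA]
  have := congrArg (fun m => (m.map abs).sum) hA.map_eigenvalues_diagonal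
  simpa only [Multiset.map_map, ← sum_eq_multiset_sum, Function.comp_def] using this

theorem opNorm_diagonal (d : Fin k → ℝ) : opNorm (Matrix.diagonal d) = ⨆ i, |d i| := by
  have hA := Matrix.isHermitian_diagonal d
  have hrange : Set.range hA.eigenvalues = Set.range d := by
    ext t
    simpa using congrArg (t ∈ ·) hA.map_eigenvalues_diagonal
  rw [opNorm, dif_pos hA, iSup, iSup, Set.range_comp' abs, Set.range_comp' abs, hrange]

theorem frobNorm_diagonal (d : Fin k → ℝ) : frobNorm (Matrix.diagonal d) = √(∑ i, d i ^ 2) := by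
  simp [frobNorm, Matrix.diagonal_apply, ite_pow]

theorem div_two_eq_val_iff {x : Fin (2 * k)} {i : Fin k} :
    x.val / 2 = i.val ↔ x = lo i ∨ x = hi i := by
  simp only [Fin.ext_iff, lo, hi]
  omega

@[simp]
theorem lo_ne_hi (i j : Fin k) : lo i ≠ hi j := by
  simp only [ne_eq, Fin.ext_iff, lo, hi]
  omega

@[simp]
theorem hi_ne_lo (i j : Fin k) : hi i ≠ lo j :=
  (lo_ne_hi j i).symm

section Indicator

variable (xs : Fin (2 * k)) (a b : ℝ) (i : Fin k)

theorem ite_lo_add_ite_hi :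
    ((if lo i = xs then a else b) + if hi i = xs then a else b) =
      if xs.val / 2 = i.val then a + b else b + b := by
  by_cases h : xs.val / 2 = i.val
  · rw [if_pos h]
    rcases div_two_eq_val_iff.1 h with rfl | rfl <;> simp [add_comm]
  · rw [if_neg h]
    rw [div_two_eq_val_iff, not_or] at h
    simp [Ne.symm h.1, Ne.symm h.2]

theorem ite_lo_sub_ite_hi_eq_zero (h : xs.val / 2 ≠ i.val) :
    ((if lo i = xs then a else b) - if hi i = xs then a else b) = 0 := by
  rw [ne_eq, div_two_eq_val_iff, not_or] at h
  simp [Ne.symm h.1, Ne.symm h.2]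

theorem sq_ite_lo_sub_ite_hi (h : xs.val / 2 = i.val) :
    ((if lo i = xs then a else b) - if hi i = xs then a else b) ^ 2 = (a - b) ^ 2 := by
  rcases div_two_eq_val_iff.1 h with rfl | rfl
  · simp
  · simp only [lo_ne_hi, if_false, if_true]
    ring

end Indicator

theorem HMat_sumElim {α β : Type*} [Fintype α] [Fintype β] (W : Fin (2 * k) → α ⊕ β → ℝ) :
    HMat k W = HMat k (fun x a => W x (.inl a)) + HMat k (fun x b => W x (.inr b)) := by
  ext i j
  simp [HMat, Fintype.sum_sum_type]

theorem HMat_scaledIdentity (c : Fin (2 * k) → ℝ) (hc : ∀ x, c x ≠ 0) :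
    HMat k (fun x y => if y = x then c x else 0) =
      Matrix.diagonal fun i => c (lo i) + c (hi i) := by
  ext i j
  simp only [HMat, sum_ite_eq, mem_univ, if_true]
  by_cases hij : i = j
  · subst hij
    rw [Matrix.diagonal_apply_eq, Fintype.sum_eq_add (lo i) (hi i) (lo_ne_hi i i)]
    · simp [hc]
    · rintro y ⟨hlo, hhi⟩
      simp [hlo, hhi]
  · rw [Matrix.diagonal_apply_ne _ hij]
    refine sum_eq_zero fun y _ => ?_
    by_cases hy : y.val / 2 = i.val
    · have hj : y ≠ lo j ∧ y ≠ hi j := by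
        rw [← not_or, ← div_two_eq_val_iff, hy]
        exact fun h => hij (Fin.ext h)
      simp [hj.1, hj.2]
    · rw [div_two_eq_val_iff, not_or] at hy
      simp [hy.1, hy.2]

theorem HMat_eraseCh {η : ℝ} (hη0 : 0 < η) (hη1 : η < 1) (xs : Fin (2 * k)) :
    HMat k (eraseCh k η xs) = Matrix.diagonal (fun i : Fin k =>
      if xs.val / 2 = i.val then 1 + η + (1 - η) / (2 * (k : ℝ) - 1) else 2 * η) := by
  have hrevealed : HMat k (fun x y => eraseCh k η xs x (.inl y)) =
      Matrix.diagonal fun i => if xs.val / 2 = i.val then 1 + η else 2 * η := by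
    rw [show (fun x y => eraseCh k η xs x (.inl y)) =
        fun x y => if y = x then (if x = xs then 1 else η) else 0 from rfl,
      HMat_scaledIdentity _ fun x => by split_ifs <;> positivity]
    simp only [ite_lo_add_ite_hi, two_mul]
  have herased : HMat k (fun x y => eraseCh k η xs x (.inr y)) =
      Matrix.diagonal fun i => if xs.val / 2 = i.val then (1 - η) / (2 * (k : ℝ) - 1) else 0 := by
    have hmass : ∑ x, (if x = xs then 0 else 1 - η) = (2 * (k : ℝ) - 1) * (1 - η) := by
      rw [Fintype.sum_eq_add_card_sub_one_mul _ xs (1 - η) fun x hx => if_neg hx]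
      simp
    ext i j
    simp only [HMat, eraseCh, Sum.elim_inr, Fintype.univ_unit, sum_singleton, hmass]
    by_cases hi : xs.val / 2 = i.val
    · by_cases hij : i = j
      · subst hij
        rw [← sq, sq_ite_lo_sub_ite_hi _ _ _ _ hi, Matrix.diagonal_apply_eq, if_pos hi]
        field_simp [sub_ne_zero.2 hη1.ne']
        ring
      · rw [ite_lo_sub_ite_hi_eq_zero _ _ _ j fun hj => hij (Fin.ext (hi.symm.trans hj)),
          Matrix.diagonal_apply_ne _ hij]
        simp
    · rw [ite_lo_sub_ite_hi_eq_zero _ _ _ _ hi, zero_mul, zero_div, Matrix.diagonal_apply]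
      simp [hi]
  rw [HMat_sumElim, hrevealed, herased, Matrix.diagonal_add]
  congr 1
  funext i
  split_ifs <;> ring

theorem sum_ite_div_two_eq_val (xs : Fin (2 * k)) (g : ℝ → ℝ) (a b : ℝ) :
    ∑ i : Fin k, g (if xs.val / 2 = i.val then a else b) = g a + (k - 1) * g b := by
  rw [Fintype.sum_eq_add_card_sub_one_mul _ ⟨xs.val / 2, by omega⟩ (g b)
    fun i hi => by rw [if_neg fun h => hi (Fin.ext h.symm)]]
  simp

theorem inv_sqrt_mem_Ioo (hk : 2 ≤ k) : (√k)⁻¹ ∈ Set.Ioo (0 : ℝ) 1 := by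
  have hk1 : (1 : ℝ) ^ 2 < k := by norm_num; exact_mod_cast hk
  exact ⟨by positivity, inv_lt_one_of_one_lt₀ (Real.lt_sqrt_of_sq_lt hk1)⟩

theorem one_add_add_div_two_mul_sub_one_mem_Icc (hk : 1 ≤ k) {η : ℝ} (hη : η ≤ 1) :
    1 + η + (1 - η) / (2 * (k : ℝ) - 1) ∈ Set.Icc (1 + η) 2 := by
  have hk' : (1 : ℝ) ≤ 2 * k - 1 := by
    have : (1 : ℝ) ≤ k := by exact_mod_cast hk
    linarith
  have h0 := div_nonneg (sub_nonneg.2 hη) (zero_le_one.trans hk')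
  have h1 := div_le_self (sub_nonneg.2 hη) hk'
  constructor <;> linarith

section InvSqrt

variable (hk : 2 ≤ k) (xs : Fin (2 * k))
include hk

theorem frobNorm_HMat_eraseCh_inv_sqrt_mem_Icc :
    frobNorm (HMat k (eraseCh k (√k)⁻¹ xs)) ∈ Set.Icc 2 (2 * √2) := by
  obtain ⟨hη0, hη1⟩ := inv_sqrt_mem_Ioo hk
  obtain ⟨ha1, ha2⟩ := one_add_add_div_two_mul_sub_one_mem_Icc (k := k) (by omega) hη1.le
  have hkη : (k : ℝ) * (√k)⁻¹ ^ 2 = 1 := by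
    rw [inv_pow, Real.sq_sqrt (by positivity)]
    exact mul_inv_cancel₀ (by norm_cast; omega)
  rw [HMat_eraseCh hη0 hη1, frobNorm_diagonal, sum_ite_div_two_eq_val xs (· ^ 2)]
  constructor
  · calc (2 : ℝ) = √(2 ^ 2) := (Real.sqrt_sq zero_le_two).symm
      _ ≤ _ := Real.sqrt_le_sqrt (by nlinarith)
  · calc _ ≤ √(2 ^ 2 * 2) := Real.sqrt_le_sqrt (by nlinarith)
      _ = 2 * √2 := by rw [Real.sqrt_mul' _ zero_le_two, Real.sqrt_sq zero_le_two]

theorem nucNorm_HMat_eraseCh_inv_sqrt_mem_Icc :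
    nucNorm (HMat k (eraseCh k (√k)⁻¹ xs)) ∈ Set.Icc (2 * √k) (2 * √k + 2) := by
  obtain ⟨hη0, hη1⟩ := inv_sqrt_mem_Ioo hk
  obtain ⟨ha1, ha2⟩ := one_add_add_div_two_mul_sub_one_mem_Icc (k := k) (by omega) hη1.le
  have hkη : (k : ℝ) * (√k)⁻¹ = √k := by rw [← div_eq_mul_inv, Real.div_sqrt]
  rw [HMat_eraseCh hη0 hη1, nucNorm_diagonal, sum_ite_div_two_eq_val xs abs,
    abs_of_pos (by linarith), abs_of_pos (by linarith)]
  constructor <;> nlinarith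

theorem opNorm_HMat_eraseCh_inv_sqrt_mem_Icc :
    opNorm (HMat k (eraseCh k (√k)⁻¹ xs)) ∈ Set.Icc 1 2 := by
  obtain ⟨hη0, hη1⟩ := inv_sqrt_mem_Ioo hk
  obtain ⟨ha1, ha2⟩ := one_add_add_div_two_mul_sub_one_mem_Icc (k := k) (by omega) hη1.le
  have : Nonempty (Fin k) := ⟨⟨0, by omega⟩⟩
  rw [HMat_eraseCh hη0 hη1, opNorm_diagonal]
  constructor
  · refine le_ciSup_of_le (Set.finite_range _).bddAbove ⟨xs.val / 2, by omega⟩ ?_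
    rw [if_pos rfl, abs_of_pos (by linarith)]
    linarith
  · refine ciSup_le fun i => ?_
    split_ifs <;> rw [abs_of_pos (by linarith)] <;> linarith

end InvSqrt

/-- The channel information matrix of the partial-erasure channel
`W_{x*}` is diagonal, with `i`-th diagonal entry `1 + η + (1−η)/(2k−1)` if
`x* ∈ {2i−1, 2i}` and `2η` otherwise; consequently, for `η = 1/√k`, the family
`𝒲_⊥^{1/√k}` satisfies `2 ≤ ‖𝒲‖_F ≤ 2√2`, `2√k ≤ ‖𝒲‖_* ≤ 2√k + 2`, and
`1 ≤ ‖𝒲‖_op ≤ 2`. -/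
theorem partial_erasure_channel_matrix_and_norms
    (k : ℕ) (hk : 2 ≤ k) :
    (∀ η : ℝ, 0 < η → η < 1 → ∀ xs : Fin (2 * k),
      HMat k (eraseCh k η xs) = Matrix.diagonal (fun i : Fin k =>
        if xs.val / 2 = i.val then 1 + η + (1 - η) / (2 * (k : ℝ) - 1) else 2 * η)) ∧
    ∀ 𝒲 : Set (Fin (2 * k) → (Fin (2 * k) ⊕ Unit) → ℝ),
      𝒲 = { W | ∃ xs : Fin (2 * k), W = eraseCh k (Real.sqrt k)⁻¹ xs } →
      (2 ≤ famFrob k 𝒲 ∧ famFrob k 𝒲 ≤ 2 * Real.sqrt 2) ∧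
        (2 * Real.sqrt k ≤ famNuc k 𝒲 ∧ famNuc k 𝒲 ≤ 2 * Real.sqrt k + 2) ∧
        (1 ≤ famOp k 𝒲 ∧ famOp k 𝒲 ≤ 2) := by
  refine ⟨fun η hη0 hη1 xs => HMat_eraseCh hη0 hη1 xs, ?_⟩
  rintro 𝒲 rfl
  have hne : {W | ∃ xs : Fin (2 * k), W = eraseCh k (√k)⁻¹ xs}.Nonempty :=
    ⟨_, ⟨0, by omega⟩, rfl⟩
  refine ⟨csSup_image_mem_Icc hne ?_, csSup_image_mem_Icc hne ?_, csSup_image_mem_Icc hne ?_⟩ <;>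
    rintro W ⟨xs, rfl⟩
  exacts [frobNorm_HMat_eraseCh_inv_sqrt_mem_Icc hk xs,
    nucNorm_HMat_eraseCh_inv_sqrt_mem_Icc hk xs, opNorm_HMat_eraseCh_inv_sqrt_mem_Icc hk xs]

end Paper
end
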